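/- Let a, b > 0, ν ∈ (0,1), n ≥ 1, h = b/a, K(t) = (1+t)²/(4t), m_k = ⌊2^k ν⌋, r₀ = min{ν,1-ν}, r_k = min{2r_{k-1}, 1−2r_{k-1}}, R_n = 1 − r_n. Then K(h^{1/2^{n-1}})^{r_n} · a^{2(1-ν)} b^{2ν} ≤ (1-ν)a² + νb² − Σ_{k=0}^{n-1} r_k [ a^{1 − m_k/2^k} b^{m_k/2^k} − a^{1 − (m_k+1)/2^k} b^{(m_k+1)/2^k} ]² ≤ K(h^{1/2^{n-1}})^{R_n} · a^{2(1-ν)} b^{2ν}. -/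

import Mathlib

/-!
Put `μₖ = {2ᵏν}`, `Uₖ = a^(1 - mₖ/2ᵏ) b^(mₖ/2ᵏ)` and `Vₖ = a^(1 - (mₖ+1)/2ᵏ) b^((mₖ+1)/2ᵏ)`.
Passing from `k` to `k + 1` halves the dyadic interval `[mₖ/2ᵏ, (mₖ+1)/2ᵏ]` containing `ν`, and the
new endpoint carries the geometric mean `√(UₖVₖ)`; since `rₖ = min {μₖ, 1 - μₖ}`, this makes the sum
telescope: the middle expression equals `(1 - μₙ) Uₙ² + μₙ Vₙ²`. Both bounds are then the refined
Young inequality `K(y/x)^r x^(1-μ) y^μ ≤ (1 - μ) x + μ y ≤ K(y/x)^(1-r) x^(1-μ) y^μ`,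
`r = min {μ, 1 - μ}`, at `x = Uₙ²`, `y = Vₙ²`, where `y / x = h^(2/2ⁿ)` and
`x^(1-μₙ) y^μₙ = a^(2(1-ν)) b^(2ν)`.
-/

open Real Finset

noncomputable def Kc (t : ℝ) : ℝ := (1 + t)^2 / (4 * t)

noncomputable def rseq (ν : ℝ) : ℕ → ℝ
  | 0 => min ν (1 - ν)
  | k + 1 => min (2 * rseq ν k) (1 - 2 * rseq ν k)

noncomputable def mfl (ν : ℝ) (k : ℕ) : ℝ := ⌊(2:ℝ)^k * ν⌋

lemma Kc_pos {t : ℝ} (ht : 0 < t) : 0 < Kc t := by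
  unfold Kc
  positivity

lemma one_le_Kc {t : ℝ} (ht : 0 < t) : 1 ≤ Kc t := by
  rw [Kc, le_div_iff₀ (by positivity)]
  nlinarith [sq_nonneg (1 - t)]

lemma Kc_inv (t : ℝ) : Kc t⁻¹ = Kc t := by
  rcases eq_or_ne t 0 with rfl | ht
  · simp
  · unfold Kc
    field_simp
    ring

lemma Kc_mul_self {t : ℝ} (ht : t ≠ 0) : Kc t * t = ((1 + t) / 2) ^ 2 := by
  unfold Kc
  field_simp
  ring

-- `K(t)^μ t^μ = ((1 + t)/2)^(2μ)`, then Bernoulli.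
lemma Kc_rpow_mul_rpow_le_of_le_half {t μ : ℝ} (ht : 0 < t) (h0 : 0 ≤ μ) (h1 : μ ≤ 1 / 2) :
    Kc t ^ μ * t ^ μ ≤ 1 - μ + μ * t := by
  have hK : Kc t ^ μ * t ^ μ = (1 + (t - 1) / 2) ^ (2 * μ) := by
    rw [← mul_rpow (Kc_pos ht).le ht.le, Kc_mul_self ht.ne', rpow_mul (by linarith), rpow_two]
    ring_nf
  rw [hK]
  calc (1 + (t - 1) / 2) ^ (2 * μ) ≤ 1 + 2 * μ * ((t - 1) / 2) :=
        rpow_one_add_le_one_add_mul_self (by linarith) (by linarith) (by linarith)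
    _ = 1 - μ + μ * t := by ring

lemma Kc_rpow_min_mul_rpow_le {t μ : ℝ} (ht : 0 < t) (h0 : 0 ≤ μ) (h1 : μ ≤ 1) :
    Kc t ^ min μ (1 - μ) * t ^ μ ≤ 1 - μ + μ * t := by
  rcases le_or_gt μ (1 / 2) with hμ | hμ
  · rw [min_eq_left (by linarith)]
    exact Kc_rpow_mul_rpow_le_of_le_half ht h0 hμ
  · rw [min_eq_right (by linarith)]
    have hinv := Kc_rpow_mul_rpow_le_of_le_half (inv_pos.2 ht) (sub_nonneg.2 h1) (by linarith)
    rw [Kc_inv, inv_rpow ht.le, ← rpow_neg ht.le] at hinv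
    have htμ : t ^ μ = t ^ (-(1 - μ)) * t := by
      rw [← rpow_add_one ht.ne']
      ring_nf
    calc Kc t ^ (1 - μ) * t ^ μ = Kc t ^ (1 - μ) * t ^ (-(1 - μ)) * t := by rw [htμ, mul_assoc]
      _ ≤ (1 - (1 - μ) + (1 - μ) * t⁻¹) * t := by gcongr
      _ = 1 - μ + μ * t := by field_simp; ring

/-- Follows from the lower bound at `t⁻¹`, since
`(1 - μ + μ t) (1 - μ + μ t⁻¹) = 1 + 4 μ (1 - μ) (K(t) - 1) ≤ K(t)`. -/
lemma le_Kc_rpow_mul_rpow {t μ : ℝ} (ht : 0 < t) (h0 : 0 ≤ μ) (h1 : μ ≤ 1) :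
    1 - μ + μ * t ≤ Kc t ^ (1 - min μ (1 - μ)) * t ^ μ := by
  have hK := Kc_pos ht
  have hlow := Kc_rpow_min_mul_rpow_le (inv_pos.2 ht) h0 h1
  rw [Kc_inv, inv_rpow ht.le, ← rpow_neg ht.le] at hlow
  have hprod : (1 - μ + μ * t) * (1 - μ + μ * t⁻¹) = 1 + 4 * μ * (1 - μ) * (Kc t - 1) := by
    unfold Kc
    field_simp
    ring
  have hpos : 0 ≤ 1 - μ + μ * t := by nlinarith
  have hbound : (1 - μ + μ * t) * (Kc t ^ min μ (1 - μ) * t ^ (-μ)) ≤ Kc t :=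
    calc (1 - μ + μ * t) * (Kc t ^ min μ (1 - μ) * t ^ (-μ))
        ≤ (1 - μ + μ * t) * (1 - μ + μ * t⁻¹) := by gcongr
      _ ≤ Kc t := by rw [hprod]; nlinarith [one_le_Kc ht, sq_nonneg (1 - 2 * μ)]
  rw [rpow_neg ht.le] at hbound
  have htμ : 0 < t ^ μ := rpow_pos_of_pos ht μ
  rw [rpow_sub hK, rpow_one, div_mul_eq_mul_div, le_div_iff₀ (by positivity)]
  calc (1 - μ + μ * t) * Kc t ^ min μ (1 - μ)
      = (1 - μ + μ * t) * (Kc t ^ min μ (1 - μ) * (t ^ μ)⁻¹) * t ^ μ := by field_simp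
    _ ≤ Kc t * t ^ μ := by gcongr

lemma rpow_one_sub_mul_rpow_eq {x y : ℝ} (hx : 0 < x) (hy : 0 < y) (μ : ℝ) :
    x ^ (1 - μ) * y ^ μ = x * (y / x) ^ μ := by
  rw [div_rpow hy.le hx.le, rpow_sub hx, rpow_one]
  field_simp

theorem Kc_rpow_min_mul_geom_mean_le {x y μ : ℝ} (hx : 0 < x) (hy : 0 < y) (h0 : 0 ≤ μ)
    (h1 : μ ≤ 1) : Kc (y / x) ^ min μ (1 - μ) * (x ^ (1 - μ) * y ^ μ) ≤ (1 - μ) * x + μ * y := by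
  have h := Kc_rpow_min_mul_rpow_le (div_pos hy hx) h0 h1
  rw [rpow_one_sub_mul_rpow_eq hx hy]
  calc Kc (y / x) ^ min μ (1 - μ) * (x * (y / x) ^ μ)
      = x * (Kc (y / x) ^ min μ (1 - μ) * (y / x) ^ μ) := by ring
    _ ≤ x * (1 - μ + μ * (y / x)) := by gcongr
    _ = (1 - μ) * x + μ * y := by field_simp

theorem le_Kc_rpow_mul_geom_mean {x y μ : ℝ} (hx : 0 < x) (hy : 0 < y) (h0 : 0 ≤ μ)
    (h1 : μ ≤ 1) :
    (1 - μ) * x + μ * y ≤ Kc (y / x) ^ (1 - min μ (1 - μ)) * (x ^ (1 - μ) * y ^ μ) := by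
  have h := le_Kc_rpow_mul_rpow (div_pos hy hx) h0 h1
  rw [rpow_one_sub_mul_rpow_eq hx hy]
  calc (1 - μ) * x + μ * y = x * (1 - μ + μ * (y / x)) := by field_simp
    _ ≤ x * (Kc (y / x) ^ (1 - min μ (1 - μ)) * (y / x) ^ μ) := by gcongr
    _ = Kc (y / x) ^ (1 - min μ (1 - μ)) * (x * (y / x) ^ μ) := by ring

noncomputable def geomInterp (a b s : ℝ) : ℝ := a ^ (1 - s) * b ^ s

section geomInterp

variable {a b : ℝ}

@[simp] lemma geomInterp_zero : geomInterp a b 0 = a := by simp [geomInterp]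

@[simp] lemma geomInterp_one : geomInterp a b 1 = b := by simp [geomInterp]

lemma geomInterp_pos (ha : 0 < a) (hb : 0 < b) (s : ℝ) : 0 < geomInterp a b s := by
  unfold geomInterp
  positivity

lemma geomInterp_eq_exp (ha : 0 < a) (hb : 0 < b) (s : ℝ) :
    geomInterp a b s = exp ((1 - s) * log a + s * log b) := by
  rw [geomInterp, rpow_def_of_pos ha, rpow_def_of_pos hb, ← exp_add]
  ring_nf

lemma geomInterp_mul_geomInterp (ha : 0 < a) (hb : 0 < b) (s t : ℝ) :
    geomInterp a b s * geomInterp a b t = geomInterp a b ((s + t) / 2) ^ 2 := by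
  simp only [geomInterp_eq_exp ha hb, ← exp_add, ← exp_nat_mul]
  congr 1
  push_cast
  ring

lemma geomInterp_sq (ha : 0 < a) (hb : 0 < b) (s : ℝ) :
    geomInterp a b s ^ 2 = a ^ (2 * (1 - s)) * b ^ (2 * s) := by
  rw [geomInterp_eq_exp ha hb, ← exp_nat_mul, rpow_def_of_pos ha, rpow_def_of_pos hb, ← exp_add]
  congr 1
  push_cast
  ring

lemma geomInterp_sq_div_geomInterp_sq (ha : 0 < a) (hb : 0 < b) (s t : ℝ) :
    geomInterp a b t ^ 2 / geomInterp a b s ^ 2 = (b / a) ^ (2 * (t - s)) := by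
  rw [geomInterp_eq_exp ha hb, geomInterp_eq_exp ha hb, ← exp_nat_mul, ← exp_nat_mul, ← exp_sub,
    rpow_def_of_pos (div_pos hb ha), log_div hb.ne' ha.ne']
  congr 1
  push_cast
  ring

lemma geomInterp_sq_rpow_mul_rpow (ha : 0 < a) (hb : 0 < b) (s t μ : ℝ) :
    (geomInterp a b s ^ 2) ^ (1 - μ) * (geomInterp a b t ^ 2) ^ μ =
      geomInterp a b ((1 - μ) * s + μ * t) ^ 2 := by
  simp only [geomInterp_eq_exp ha hb, ← exp_nat_mul, ← exp_mul, ← exp_add]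
  congr 1
  push_cast
  ring

end geomInterp

lemma Int.floor_two_mul_of_fract_lt {x : ℝ} (hx : Int.fract x < 1 / 2) :
    ⌊2 * x⌋ = 2 * ⌊x⌋ := by
  rw [Int.floor_eq_iff]
  push_cast
  constructor <;> linarith [Int.floor_add_fract x, Int.fract_nonneg x]

lemma Int.floor_two_mul_of_le_fract {x : ℝ} (hx : 1 / 2 ≤ Int.fract x) :
    ⌊2 * x⌋ = 2 * ⌊x⌋ + 1 := by
  rw [Int.floor_eq_iff]
  push_cast
  constructor <;> linarith [Int.floor_add_fract x, Int.fract_lt_one x]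

noncomputable def dyadicFract (ν : ℝ) (k : ℕ) : ℝ := Int.fract ((2:ℝ)^k * ν)

lemma mfl_add_dyadicFract (ν : ℝ) (k : ℕ) : mfl ν k + dyadicFract ν k = 2 ^ k * ν :=
  Int.floor_add_fract _

lemma dyadicFract_mem_Ico (ν : ℝ) (k : ℕ) : dyadicFract ν k ∈ Set.Ico 0 1 :=
  ⟨Int.fract_nonneg _, Int.fract_lt_one _⟩

lemma mfl_zero {ν : ℝ} (h0 : 0 ≤ ν) (h1 : ν < 1) : mfl ν 0 = 0 := by
  simp [mfl, Int.floor_eq_zero_iff.2 ⟨h0, h1⟩]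

lemma dyadicFract_zero {ν : ℝ} (h0 : 0 ≤ ν) (h1 : ν < 1) : dyadicFract ν 0 = ν := by
  simp [dyadicFract, Int.fract_eq_self.2 ⟨h0, h1⟩]

lemma dyadic_succ_of_lt_half {ν : ℝ} {k : ℕ} (h : dyadicFract ν k < 1 / 2) :
    mfl ν (k + 1) = 2 * mfl ν k ∧ dyadicFract ν (k + 1) = 2 * dyadicFract ν k := by
  have hfl : mfl ν (k + 1) = 2 * mfl ν k := by
    rw [mfl, mfl, pow_succ, mul_comm _ (2:ℝ), mul_assoc, Int.floor_two_mul_of_fract_lt h]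
    push_cast
    rfl
  refine ⟨hfl, ?_⟩
  have h2 : (2:ℝ) ^ (k + 1) * ν = 2 * (2 ^ k * ν) := by ring
  linarith [mfl_add_dyadicFract ν k, mfl_add_dyadicFract ν (k + 1)]

lemma dyadic_succ_of_half_le {ν : ℝ} {k : ℕ} (h : 1 / 2 ≤ dyadicFract ν k) :
    mfl ν (k + 1) = 2 * mfl ν k + 1 ∧ dyadicFract ν (k + 1) = 2 * dyadicFract ν k - 1 := by
  have hfl : mfl ν (k + 1) = 2 * mfl ν k + 1 := by
    rw [mfl, mfl, pow_succ, mul_comm _ (2:ℝ), mul_assoc, Int.floor_two_mul_of_le_fract h]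
    push_cast
    rfl
  refine ⟨hfl, ?_⟩
  have h2 : (2:ℝ) ^ (k + 1) * ν = 2 * (2 ^ k * ν) := by ring
  linarith [mfl_add_dyadicFract ν k, mfl_add_dyadicFract ν (k + 1)]

lemma rseq_eq_min_dyadicFract {ν : ℝ} (h0 : 0 ≤ ν) (h1 : ν < 1) (k : ℕ) :
    rseq ν k = min (dyadicFract ν k) (1 - dyadicFract ν k) := by
  induction k with
  | zero => rw [dyadicFract_zero h0 h1, rseq]
  | succ k ih =>
    rw [rseq, ih]
    rcases lt_or_ge (dyadicFract ν k) (1 / 2) with h | h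
    · rw [min_eq_left (a := dyadicFract ν k) (by linarith), (dyadic_succ_of_lt_half h).2]
    · rw [min_eq_right (b := 1 - dyadicFract ν k) (by linarith), (dyadic_succ_of_half_le h).2,
        min_comm]
      congr 1 <;> ring

noncomputable def dyadicMean (a b ν : ℝ) (k : ℕ) : ℝ :=
  (1 - dyadicFract ν k) * geomInterp a b (mfl ν k / 2 ^ k) ^ 2 +
    dyadicFract ν k * geomInterp a b ((mfl ν k + 1) / 2 ^ k) ^ 2

section dyadicMean

variable {a b ν : ℝ}

lemma dyadicMean_zero (h0 : 0 ≤ ν) (h1 : ν < 1) :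
    dyadicMean a b ν 0 = (1 - ν) * a ^ 2 + ν * b ^ 2 := by
  simp [dyadicMean, mfl_zero h0 h1, dyadicFract_zero h0 h1]

lemma dyadicMean_succ (ha : 0 < a) (hb : 0 < b) (h0 : 0 ≤ ν) (h1 : ν < 1) (k : ℕ) :
    dyadicMean a b ν (k + 1) = dyadicMean a b ν k - rseq ν k *
      (geomInterp a b (mfl ν k / 2 ^ k) - geomInterp a b ((mfl ν k + 1) / 2 ^ k)) ^ 2 := by
  have hmid : (2 * mfl ν k + 1) / 2 ^ (k + 1) = (mfl ν k / 2 ^ k + (mfl ν k + 1) / 2 ^ k) / 2 := by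
    field_simp
    ring
  rw [rseq_eq_min_dyadicFract h0 h1]
  rcases lt_or_ge (dyadicFract ν k) (1 / 2) with h | h
  · obtain ⟨hm, hf⟩ := dyadic_succ_of_lt_half h
    have hleft : 2 * mfl ν k / 2 ^ (k + 1) = mfl ν k / 2 ^ k := by field_simp; ring
    rw [dyadicMean, dyadicMean, hm, hf, hleft, hmid, ← geomInterp_mul_geomInterp ha hb,
      min_eq_left (by linarith)]
    ring
  · obtain ⟨hm, hf⟩ := dyadic_succ_of_half_le h
    have hright : (2 * mfl ν k + 1 + 1) / 2 ^ (k + 1) = (mfl ν k + 1) / 2 ^ k := by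
      field_simp; ring
    rw [dyadicMean, dyadicMean, hm, hf, hright, hmid, ← geomInterp_mul_geomInterp ha hb,
      min_eq_right (by linarith)]
    ring

lemma sub_sum_eq_dyadicMean (ha : 0 < a) (hb : 0 < b) (h0 : 0 ≤ ν) (h1 : ν < 1) (n : ℕ) :
    (1 - ν) * a ^ 2 + ν * b ^ 2 - ∑ k ∈ range n, rseq ν k *
      (geomInterp a b (mfl ν k / 2 ^ k) - geomInterp a b ((mfl ν k + 1) / 2 ^ k)) ^ 2 =
      dyadicMean a b ν n := by
  induction n with
  | zero => simp [dyadicMean_zero h0 h1]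
  | succ n ih => rw [sum_range_succ, ← sub_sub, ih, dyadicMean_succ ha hb h0 h1]

end dyadicMean

theorem stmt19 (a b ν : ℝ) (ha : 0 < a) (hb : 0 < b) (hν : ν ∈ Set.Ioo (0:ℝ) 1)
    (n : ℕ) (hn : 1 ≤ n) (h : ℝ) (hh : h = b / a) :
    Kc (h ^ ((1:ℝ)/2^(n-1))) ^ rseq ν n * (a ^ (2*(1 - ν)) * b ^ (2*ν)) ≤
      (1 - ν) * a^2 + ν * b^2 - (∑ k ∈ Finset.range n, rseq ν k * (a ^ (1 - mfl ν k / 2^k) * b ^ (mfl ν k / 2^k) - a ^ (1 - (mfl ν k + 1) / 2^k) * b ^ ((mfl ν k + 1) / 2^k))^2) ∧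
    (1 - ν) * a^2 + ν * b^2 - (∑ k ∈ Finset.range n, rseq ν k * (a ^ (1 - mfl ν k / 2^k) * b ^ (mfl ν k / 2^k) - a ^ (1 - (mfl ν k + 1) / 2^k) * b ^ ((mfl ν k + 1) / 2^k))^2) ≤
      Kc (h ^ ((1:ℝ)/2^(n-1))) ^ (1 - rseq ν n) * (a ^ (2*(1 - ν)) * b ^ (2*ν)) := by
  obtain ⟨hν0, hν1⟩ := hν
  have key := sub_sum_eq_dyadicMean ha hb hν0.le hν1 n
  simp only [geomInterp] at key
  rw [key, dyadicMean, rseq_eq_min_dyadicFract hν0.le hν1]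
  set μ := dyadicFract ν n
  set x := geomInterp a b (mfl ν n / 2 ^ n) ^ 2
  set y := geomInterp a b ((mfl ν n + 1) / 2 ^ n) ^ 2
  have hratio : h ^ ((1:ℝ) / 2 ^ (n - 1)) = y / x := by
    rw [geomInterp_sq_div_geomInterp_sq ha hb, hh]
    congr 1
    obtain ⟨k, rfl⟩ := Nat.exists_eq_add_of_le' hn
    rw [Nat.add_sub_cancel]
    field_simp
    ring
  have hmean : x ^ (1 - μ) * y ^ μ = a ^ (2 * (1 - ν)) * b ^ (2 * ν) := by
    rw [geomInterp_sq_rpow_mul_rpow ha hb, geomInterp_sq ha hb]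
    have hcomb : (1 - μ) * (mfl ν n / 2 ^ n) + μ * ((mfl ν n + 1) / 2 ^ n) = ν := by
      field_simp
      linarith [mfl_add_dyadicFract ν n]
    rw [hcomb]
  obtain ⟨hμ0, hμ1⟩ := dyadicFract_mem_Ico ν n
  have hx : 0 < x := pow_pos (geomInterp_pos ha hb _) 2
  have hy : 0 < y := pow_pos (geomInterp_pos ha hb _) 2
  rw [hratio, ← hmean]
  exact ⟨Kc_rpow_min_mul_geom_mean_le hx hy hμ0 hμ1.le, le_Kc_rpow_mul_geom_mean hx hy hμ0 hμ1.le⟩
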